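/- arXiv:math/0703919 — 8 statements merged into one kernel-verified Lean document; each statement's English description precedes it below -/
import Mathlib

section
/- Let Q be a loop with left multiplication group G = LMlt(Q) (the group generated by all left translations L_a(x) = a*x). Then Q equals its commutator-associator subloop Q' (i.e., Q admits no nontrivial homomorphism onto an abelian group) if and only if the commutator subgroup G' acts transitively on Q. -/
/-- A loop `Q` equals its commutator-associator subloop (i.e. admits no
surjective homomorphism onto a nontrivial abelian group) iff the commutator subgroup of
its left multiplication group acts transitively on `Q`. -/
theorem stmt0 (Q : Type) [Mul Q] [One Q]
    (h1 : ∀ a : Q, 1 * a = a) (h2 : ∀ a : Q, a * 1 = a)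
    (L : Q → Equiv.Perm Q) (hL : ∀ a x : Q, L a x = a * x)
    (R : Q → Equiv.Perm Q) (hR : ∀ a x : Q, R a x = x * a)
    (G : Subgroup (Equiv.Perm Q)) (hG : G = Subgroup.closure (Set.range L)) :
    (∀ (A : Type) [CommGroup A] (φ : Q → A),
        Function.Surjective φ → (∀ x y : Q, φ (x * y) = φ x * φ y) → Subsingleton A)
      ↔ (∀ x y : Q, ∃ g ∈ ⁅G, G⁆, g x = y) := by
  have hLG : ∀ a : Q, L a ∈ G := fun a => by
    rw [hG]; exact Subgroup.subset_closure ⟨a, rfl⟩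
  constructor
  · -- ⇒ : no abelian quotient implies transitivity of the commutator subgroup
    intro H
    -- work inside the group ↥G
    set K : Subgroup ↥G := ⁅(⊤ : Subgroup ↥G), (⊤ : Subgroup ↥G)⁆ with hK
    have hmapK : Subgroup.map G.subtype K = ⁅G, G⁆ := by
      rw [hK, Subgroup.map_commutator, ← MonoidHom.range_eq_map, Subgroup.range_subtype]
    -- the orbit relation of the commutator subgroup
    set r : Q → Q → Prop := fun x y => ∃ k : ↥G, k ∈ K ∧ (k : Equiv.Perm Q) x = y with hr
    have rrefl : ∀ x, r x x := fun x => ⟨1, one_mem K, rfl⟩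
    have rsymm : ∀ x y, r x y → r y x := by
      rintro x y ⟨k, hk, rfl⟩
      exact ⟨k⁻¹, inv_mem hk, by simp⟩
    have rtrans : ∀ x y z, r x y → r y z → r x z := by
      rintro x y z ⟨k, hk, rfl⟩ ⟨k', hk', rfl⟩
      exact ⟨k' * k, mul_mem hk' hk, by simp⟩
    have rG : ∀ (g : ↥G) x y, r x y → r ((g : Equiv.Perm Q) x) ((g : Equiv.Perm Q) y) := by
      rintro g x y ⟨k, hk, rfl⟩
      refine ⟨g * k * g⁻¹, ?_, by simp⟩
      have : K.Normal := Subgroup.commutator_normal ⊤ ⊤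
      exact this.conj_mem k hk g
    -- the stabilizer of the orbit of 1
    set N : Subgroup ↥G :=
      { carrier := {g : ↥G | r ((g : Equiv.Perm Q) 1) 1}
        one_mem' := rrefl 1
        mul_mem' := by
          intro g h hg hh
          have h1' : r ((g : Equiv.Perm Q) ((h : Equiv.Perm Q) 1)) ((g : Equiv.Perm Q) 1) :=
            rG g _ _ hh
          have : r ((g : Equiv.Perm Q) ((h : Equiv.Perm Q) 1)) 1 :=
            rtrans _ _ _ h1' hg
          simpa using this
        inv_mem' := by
          intro g hg
          have := rG g⁻¹ _ _ hg
          simp only [Subgroup.coe_inv, Equiv.Perm.coe_inv, Equiv.symm_apply_apply] at this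
          exact rsymm _ _ this } with hN
    have hKN : K ≤ N := by
      intro k hk
      exact ⟨k⁻¹, inv_mem hk, by simp⟩
    have hNnormal : N.Normal := by
      constructor
      intro n hn g
      have hc : @Bracket.bracket _ _ commutatorElement g n ∈ K := Subgroup.commutator_mem_commutator (Subgroup.mem_top g)
        (Subgroup.mem_top n)
      have : g * n * g⁻¹ = @Bracket.bracket _ _ commutatorElement g n * n := by
        rw [commutatorElement_def]; group
      rw [this]
      exact mul_mem (hKN hc) hn
    letI : CommGroup (↥G ⧸ N) :=
      { (inferInstance : Group (↥G ⧸ N)) with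
        mul_comm := by
          intro a b
          induction a using QuotientGroup.induction_on with
          | H g =>
          induction b using QuotientGroup.induction_on with
          | H h =>
          show QuotientGroup.mk (g * h) = QuotientGroup.mk (h * g)
          rw [QuotientGroup.eq]
          have : (g * h)⁻¹ * (h * g) = @Bracket.bracket _ _ commutatorElement h⁻¹ g⁻¹ := by
            rw [commutatorElement_def]; group
          rw [this]
          exact hKN (Subgroup.commutator_mem_commutator (Subgroup.mem_top _)
            (Subgroup.mem_top _)) }
    set φ : Q → ↥G ⧸ N := fun x => QuotientGroup.mk ⟨L x, hLG x⟩ with hφ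
    have hLone : ∀ x : Q, L x 1 = x := fun x => by rw [hL, h2]
    have hLinv : ∀ z : Q, (L z)⁻¹ z = 1 := fun z => by
      rw [Equiv.Perm.inv_def, Equiv.symm_apply_eq, hLone]
    have hhom : ∀ x y : Q, φ (x * y) = φ x * φ y := by
      intro x y
      show QuotientGroup.mk _ = QuotientGroup.mk (⟨L x, hLG x⟩ * ⟨L y, hLG y⟩ : ↥G)
      rw [QuotientGroup.eq]
      show r _ 1
      have : ((⟨L (x * y), hLG _⟩⁻¹ * (⟨L x, hLG x⟩ * ⟨L y, hLG y⟩) : ↥G) : Equiv.Perm Q) 1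
          = (L (x * y))⁻¹ (L x (L y 1)) := by simp [Equiv.Perm.mul_apply]
      rw [this, hLone, hL x y, hLinv]
      exact rrefl 1
    have hsurj : Function.Surjective φ := by
      intro a
      induction a using QuotientGroup.induction_on with
      | H g =>
      refine ⟨(g : Equiv.Perm Q) 1, ?_⟩
      show QuotientGroup.mk _ = QuotientGroup.mk g
      rw [QuotientGroup.eq]
      show r _ 1
      have : ((⟨L ((g : Equiv.Perm Q) 1), hLG _⟩⁻¹ * g : ↥G) : Equiv.Perm Q) 1
          = (L ((g : Equiv.Perm Q) 1))⁻¹ ((g : Equiv.Perm Q) 1) := by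
        simp [Equiv.Perm.mul_apply]
      rw [this, hLinv]
      exact rrefl 1
    haveI hsub : Subsingleton (↥G ⧸ N) := H _ φ hsurj hhom
    have hall : ∀ g : ↥G, r ((g : Equiv.Perm Q) 1) 1 := by
      intro g
      have : (QuotientGroup.mk g : ↥G ⧸ N) = 1 := Subsingleton.elim _ _
      exact (QuotientGroup.eq_one_iff g).mp this
    intro x y
    have hx : r x 1 := by have := hall ⟨L x, hLG x⟩; rwa [show ((⟨L x, hLG x⟩ : ↥G) :
      Equiv.Perm Q) 1 = x from hLone x] at this
    have hy : r y 1 := by have := hall ⟨L y, hLG y⟩; rwa [show ((⟨L y, hLG y⟩ : ↥G) :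
      Equiv.Perm Q) 1 = y from hLone y] at this
    obtain ⟨k, hk, hkx⟩ := rtrans _ _ _ hx (rsymm _ _ hy)
    refine ⟨(k : Equiv.Perm Q), ?_, hkx⟩
    rw [← hmapK]
    exact ⟨k, hk, rfl⟩
  · -- ⇐ : transitivity implies no nontrivial abelian quotient
    intro T A _ φ hsurj hhom
    have hφ1 : φ 1 = 1 := by
      have := hhom 1 1
      rw [h1 1] at this
      exact (left_eq_mul.mp this)
    -- every element of G acts on φ-values by a constant
    have hP : ∀ g ∈ G, ∃ c : A, ∀ x, φ (g x) = c * φ x := by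
      intro g hg
      rw [hG] at hg
      induction hg using Subgroup.closure_induction with
      | mem g hg =>
        obtain ⟨a, rfl⟩ := hg
        exact ⟨φ a, fun x => by rw [hL, hhom]⟩
      | one => exact ⟨1, fun x => by simp⟩
      | mul g h _ _ ihg ihh =>
        obtain ⟨c, hc⟩ := ihg
        obtain ⟨d, hd⟩ := ihh
        exact ⟨c * d, fun x => by rw [Equiv.Perm.mul_apply, hc, hd, mul_assoc]⟩
      | inv g _ ihg =>
        obtain ⟨c, hc⟩ := ihg
        refine ⟨c⁻¹, fun x => ?_⟩
        have := hc (g⁻¹ x)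
        rw [← Equiv.Perm.mul_apply, mul_inv_cancel, Equiv.Perm.one_apply] at this
        rw [this]
        group
    -- the subgroup of permutations preserving φ
    set Hs : Subgroup (Equiv.Perm Q) :=
      { carrier := {g : Equiv.Perm Q | ∀ x, φ (g x) = φ x}
        one_mem' := fun x => rfl
        mul_mem' := by
          intro g h hg hh x
          rw [Equiv.Perm.mul_apply, hg, hh]
        inv_mem' := by
          intro g hg x
          have := hg (g⁻¹ x)
          rw [← Equiv.Perm.mul_apply, mul_inv_cancel, Equiv.Perm.one_apply] at this
          exact this.symm } with hHs
    have hcomm : ⁅G, G⁆ ≤ Hs := by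
      rw [Subgroup.commutator_le]
      intro g hg h hh
      obtain ⟨c, hc⟩ := hP g hg
      obtain ⟨d, hd⟩ := hP h hh
      have hcinv : ∀ x, φ (g⁻¹ x) = c⁻¹ * φ x := by
        intro x
        have := hc (g⁻¹ x)
        rw [← Equiv.Perm.mul_apply, mul_inv_cancel, Equiv.Perm.one_apply] at this
        rw [this]; group
      have hdinv : ∀ x, φ (h⁻¹ x) = d⁻¹ * φ x := by
        intro x
        have := hd (h⁻¹ x)
        rw [← Equiv.Perm.mul_apply, mul_inv_cancel, Equiv.Perm.one_apply] at this
        rw [this]; group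
      intro x
      rw [commutatorElement_def]
      simp only [Equiv.Perm.mul_apply]
      rw [hc, hd, hcinv, hdinv]
      have : c * (d * (c⁻¹ * (d⁻¹ * φ x))) = (c * c⁻¹) * ((d * d⁻¹) * φ x) := by
        simp only [mul_assoc]
        rw [mul_left_comm d c⁻¹]
      rw [this]
      simp
    constructor
    intro a b
    obtain ⟨x, rfl⟩ := hsurj a
    obtain ⟨y, rfl⟩ := hsurj b
    obtain ⟨g, hg, hgx⟩ := T x y
    have := hcomm hg x
    rw [hgx] at this
    exact this.symm
end

section
/- Let Q be a loop, G = LMlt(Q), and A an abelian group with a surjective loop homomorphism φ : Q → A. Then the assignment L_x ↦ φ(x) extends to a well-defined surjective group homomorphism G → A whose kernel contains the stabilizer G_1 of the identity element of Q. -/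
/-- A surjective loop homomorphism `φ : Q → A` onto an abelian group extends to a
well-defined surjective group homomorphism `LMlt(Q) → A`, `L_x ↦ φ(x)`, whose kernel contains
the stabilizer of `1`. -/
theorem stmt1 (Q : Type) [Mul Q] [One Q]
    (h1 : ∀ a : Q, 1 * a = a) (h2 : ∀ a : Q, a * 1 = a)
    (L : Q → Equiv.Perm Q) (hL : ∀ a x : Q, L a x = a * x)
    (R : Q → Equiv.Perm Q) (hR : ∀ a x : Q, R a x = x * a)
    (A : Type) [CommGroup A] (φ : Q → A)
    (hsurj : Function.Surjective φ) (hhom : ∀ x y : Q, φ (x * y) = φ x * φ y) :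
    ∃ ψ : (Subgroup.closure (Set.range L) : Subgroup (Equiv.Perm Q)) →* A,
      (∀ x : Q, ψ ⟨L x, Subgroup.subset_closure ⟨x, rfl⟩⟩ = φ x) ∧
      Function.Surjective ψ ∧
      (∀ g : (Subgroup.closure (Set.range L) : Subgroup (Equiv.Perm Q)),
        (g : Equiv.Perm Q) 1 = 1 → ψ g = 1) := by
  have φ1 : φ 1 = 1 := by
    have := hhom 1 1
    rw [h1] at this
    exact left_eq_mul.mp this
  have key : ∀ g ∈ Subgroup.closure (Set.range L), ∀ x : Q, φ (g x) = φ (g 1) * φ x := by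
    intro g hg
    induction hg using Subgroup.closure_induction with
    | mem g hg =>
      obtain ⟨a, rfl⟩ := hg
      intro x
      rw [hL, hL, hhom, h2]
    | one => intro x; simp [φ1]
    | mul g h _ _ ihg ihh =>
      intro x
      simp only [Equiv.Perm.mul_apply]
      rw [ihg, ihh, ihg (h 1), ihh, φ1]; group
    | inv g _ ihg =>
      intro x
      have e1 : φ (g (g⁻¹ x)) = φ (g 1) * φ (g⁻¹ x) := ihg _
      have e2 : φ (g (g⁻¹ 1)) = φ (g 1) * φ (g⁻¹ 1) := ihg _
      simp only [← Equiv.Perm.mul_apply, mul_inv_cancel, Equiv.Perm.one_apply] at e1 e2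
      rw [φ1] at e2
      rw [eq_comm, ← eq_inv_mul_iff_mul_eq] at e1
      rw [e1, inv_eq_of_mul_eq_one_right e2.symm]
  refine ⟨MonoidHom.mk' (fun g => φ ((g : Equiv.Perm Q) 1)) ?_, ?_, ?_, ?_⟩
  · intro g h
    simp only [Subgroup.coe_mul, Equiv.Perm.mul_apply]
    exact key g.1 g.2 (h.1 1)
  · intro x
    simp [hL, h2]
  · intro a
    obtain ⟨x, hx⟩ := hsurj a
    exact ⟨⟨L x, Subgroup.subset_closure ⟨x, rfl⟩⟩, by simp [hL, h2, hx]⟩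
  · intro g hg
    simp [hg, φ1]
end

section
/- Let Q be a left Bol loop, σ an automorphism of G = LMlt(Q) with L_x^σ = L_x^{-1} for all x, and K a proper normal subloop of Q. Then K = N(1) (the orbit of 1 under N) for some σ-invariant normal subgroup N of G; specifically N = M ∩ M^σ where M = {g ∈ G : g(yK) = yK for all y ∈ Q}. -/
/-!
The cosets `yK` form a system of blocks for `G = LMlt(Q)`: normality of `K` gives
`L_x(yK) = (xy)K`, and the subloop axioms make the cosets a partition of `Q`. Hence the kernel
`M` of the action of `G` on the cosets is normal, and so is `N = M ∩ M^σ`. Since `σ` inverts the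
generators `L_x`, it is an involution, so `N` is `σ`-invariant. For `x ∈ K`, `xK = Kx` puts `xy`
in `yK`, so `L_x ∈ M` and `L_x^σ = L_x⁻¹ ∈ M`, whence `K ⊆ N(1)`; conversely every element of `M`
maps `1K = K` onto itself.
-/

open Equiv

section Involution

variable {H : Type*} [Group H]

theorem MulEquiv.involutive_of_apply_eq_inv_of_closure_eq_top {S : Set H}
    (hS : Subgroup.closure S = ⊤) (σ : H ≃* H) (hσ : ∀ s ∈ S, σ s = s⁻¹) :
    Function.Involutive σ := fun g =>
  DFunLike.congr_fun (MonoidHom.eq_of_eqOn_dense hS (f := (σ.trans σ).toMonoidHom)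
    (g := MonoidHom.id H) fun s hs => by simp [hσ s hs]) g

theorem Subgroup.map_inf_comap_eq_of_involutive (σ : H ≃* H) (hσ : Function.Involutive σ)
    (M : Subgroup H) :
    (M ⊓ M.comap σ.toMonoidHom).map σ.toMonoidHom = M ⊓ M.comap σ.toMonoidHom := by
  ext g
  have hsymm : σ.symm g = σ g := (MulEquiv.symm_apply_eq σ).2 (hσ g).symm
  simp only [Subgroup.mem_map_equiv, Subgroup.mem_inf, Subgroup.mem_comap, hsymm,
    MulEquiv.coe_toMonoidHom, hσ g, and_comm]

end Involution

section Blocks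

variable {α : Type*}

structure IsBlockSystem (B : α → Set α) : Prop where
  mem_self : ∀ y, y ∈ B y
  eq_of_mem : ∀ {y z}, z ∈ B y → B z = B y

namespace IsBlockSystem

variable {B : α → Set α}

theorem image_inv_eq_block (hB : IsBlockSystem B) {p : Perm α}
    (hp : ∀ y, ∃ y', ⇑p '' B y = B y') (y : α) : ∃ y', ⇑p⁻¹ '' B y = B y' := by
  obtain ⟨y', hy'⟩ := hp (p⁻¹ y)
  have hy : y ∈ B y' := hy' ▸ ⟨p⁻¹ y, hB.mem_self _, p.apply_symm_apply y⟩
  refine ⟨p⁻¹ y, ?_⟩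
  rw [hB.eq_of_mem hy, ← hy', ← Set.image_comp, ← Perm.coe_mul, inv_mul_cancel,
    Perm.coe_one, Set.image_id]

def permutingSubgroup (hB : IsBlockSystem B) : Subgroup (Perm α) where
  carrier := {p | ∀ y, ∃ y', ⇑p '' B y = B y'}
  one_mem' y := ⟨y, by simp⟩
  mul_mem' {p q} hp hq y := by
    obtain ⟨y₁, h₁⟩ := hq y
    obtain ⟨y₂, h₂⟩ := hp y₁
    exact ⟨y₂, by rw [Perm.coe_mul, Set.image_comp, h₁, h₂]⟩
  inv_mem' hp := hB.image_inv_eq_block hp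

end IsBlockSystem

def blockStabilizer (G : Subgroup (Perm α)) (B : α → Set α) : Subgroup G where
  carrier := {g | ∀ y, ⇑(g : Perm α) '' B y = B y}
  one_mem' y := by simp
  mul_mem' {g h} hg hh y := by
    rw [Subgroup.coe_mul, Perm.coe_mul, Set.image_comp, hh y, hg y]
  inv_mem' {g} hg y := by
    rw [Subgroup.coe_inv, ← hg y, ← Set.image_comp, ← Perm.coe_mul, inv_mul_cancel, Perm.coe_one,
      Set.image_id, hg y]

theorem blockStabilizer_normal {G : Subgroup (Perm α)} {B : α → Set α} (hB : IsBlockSystem B)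
    (hG : G ≤ hB.permutingSubgroup) : (blockStabilizer G B).Normal where
  conj_mem n hn g y := by
    obtain ⟨y', hy'⟩ := hG (inv_mem g.2) y
    rw [Subgroup.coe_mul, Subgroup.coe_mul, Subgroup.coe_inv, Perm.coe_mul, Perm.coe_mul,
      Set.image_comp, Set.image_comp, hy', hn y', ← hy', ← Set.image_comp, ← Perm.coe_mul,
      mul_inv_cancel, Perm.coe_one, Set.image_id]

theorem apply_mem_of_mem_blockStabilizer {G : Subgroup (Perm α)} {B : α → Set α}
    {g : G} (hg : g ∈ blockStabilizer G B) {x y : α} (hx : x ∈ B y) : (g : Perm α) x ∈ B y :=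
  hg y ▸ Set.mem_image_of_mem _ hx

end Blocks

section LoopCosets

variable {Q : Type*} [Mul Q] (K : Set Q)

def loopCoset (y : Q) : Set Q := {z | ∃ k ∈ K, z = y * k}

variable {K}

theorem loopCoset_one [One Q] (h1 : ∀ a : Q, 1 * a = a) : loopCoset K 1 = K := by
  ext z
  exact ⟨by rintro ⟨k, hk, rfl⟩; rwa [h1], fun hz => ⟨z, hz, (h1 z).symm⟩⟩

theorem image_mul_left_loopCoset
    (hn1 : ∀ x y : Q, {z | ∃ k ∈ K, z = x * (y * k)} = {z | ∃ k ∈ K, z = (x * y) * k})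
    (a y : Q) : (a * ·) '' loopCoset K y = loopCoset K (a * y) := by
  unfold loopCoset
  rw [← hn1]
  ext z
  constructor
  · rintro ⟨_, ⟨k, hk, rfl⟩, rfl⟩
    exact ⟨k, hk, rfl⟩
  · rintro ⟨k, hk, rfl⟩
    exact ⟨y * k, ⟨k, hk, rfl⟩, rfl⟩

theorem isBlockSystem_loopCoset [One Q] (h2 : ∀ a : Q, a * 1 = a) (hK1 : (1 : Q) ∈ K)
    (hKm : ∀ a ∈ K, ∀ b ∈ K, a * b ∈ K) (hKld : ∀ a ∈ K, ∀ b ∈ K, ∃ c ∈ K, b = a * c)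
    (hn1 : ∀ x y : Q, {z | ∃ k ∈ K, z = x * (y * k)} = {z | ∃ k ∈ K, z = (x * y) * k}) :
    IsBlockSystem (loopCoset K) where
  mem_self y := ⟨1, hK1, (h2 y).symm⟩
  eq_of_mem := by
    rintro y _ ⟨k₀, hk₀, rfl⟩
    rw [loopCoset, ← hn1]
    ext z
    constructor
    · rintro ⟨k, hk, rfl⟩
      exact ⟨k₀ * k, hKm k₀ hk₀ k hk, rfl⟩
    · rintro ⟨k, hk, rfl⟩
      obtain ⟨c, hc, rfl⟩ := hKld k₀ hk₀ k hk
      exact ⟨c, hc, rfl⟩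

theorem loopCoset_mul_left_of_mem (hB : IsBlockSystem (loopCoset K))
    (hn3 : ∀ x : Q, {z | ∃ k ∈ K, z = x * k} = {z | ∃ k ∈ K, z = k * x})
    {q : Q} (hq : q ∈ K) (y : Q) : loopCoset K (q * y) = loopCoset K y :=
  hB.eq_of_mem (show q * y ∈ {z | ∃ k ∈ K, z = y * k} from hn3 y ▸ ⟨q, hq, rfl⟩)

end LoopCosets

theorem stmt3_general (Q : Type) [Mul Q] [One Q]
    (h1 : ∀ a : Q, 1 * a = a) (h2 : ∀ a : Q, a * 1 = a)
    (L : Q → Equiv.Perm Q) (hL : ∀ a x : Q, L a x = a * x)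
    (G : Subgroup (Equiv.Perm Q)) (hG : G = Subgroup.closure (Set.range L))
    (σ : G ≃* G)
    (hσ : ∀ (x : Q) (hx : L x ∈ G), σ ⟨L x, hx⟩ = (⟨L x, hx⟩ : G)⁻¹)
    (K : Set Q)
    -- `K` is a subloop:
    (hK1 : (1 : Q) ∈ K)
    (hKm : ∀ a ∈ K, ∀ b ∈ K, a * b ∈ K)
    (hKld : ∀ a ∈ K, ∀ b ∈ K, (L a).symm b ∈ K)
    -- `K` is normal: `x(yK) = (xy)K`, `(Kx)y = K(xy)`, `xK = Kx`:
    (hn1 : ∀ x y : Q, {z | ∃ k ∈ K, z = x * (y * k)} = {z | ∃ k ∈ K, z = (x * y) * k})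
    (hn3 : ∀ x : Q, {z | ∃ k ∈ K, z = x * k} = {z | ∃ k ∈ K, z = k * x}) :
    ∃ N : Subgroup G, N.Normal ∧ Subgroup.map σ.toMonoidHom N = N ∧
      ((N : Set G) = {g : G |
          (∀ y : Q, (g : Equiv.Perm Q) '' {z | ∃ k ∈ K, z = y * k} = {z | ∃ k ∈ K, z = y * k}) ∧
          (∀ y : Q, ((σ g : G) : Equiv.Perm Q) '' {z | ∃ k ∈ K, z = y * k}
              = {z | ∃ k ∈ K, z = y * k})}) ∧
      K = {q : Q | ∃ g ∈ N, ((g : G) : Equiv.Perm Q) 1 = q} := by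
  subst hG
  have hLmul (a : Q) : ⇑(L a) = (a * ·) := funext (hL a)
  have hB : IsBlockSystem (loopCoset K) := isBlockSystem_loopCoset h2 hK1 hKm
    (fun a ha b hb => ⟨(L a).symm b, hKld a ha b hb, by rw [← hL, Equiv.apply_symm_apply]⟩) hn1
  set M := blockStabilizer (Subgroup.closure (Set.range L)) (loopCoset K)
  have hLM (q : Q) (hq : q ∈ K) (hLq : L q ∈ Subgroup.closure (Set.range L)) :
      ⟨L q, hLq⟩ ∈ M := fun y => by
    rw [hLmul, image_mul_left_loopCoset hn1, loopCoset_mul_left_of_mem hB hn3 hq]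
  have hM : M.Normal := blockStabilizer_normal hB <| (Subgroup.closure_le _).2 <|
    Set.range_subset_iff.2 fun a y => ⟨a * y, by rw [hLmul, image_mul_left_loopCoset hn1]⟩
  have hσσ : Function.Involutive σ := σ.involutive_of_apply_eq_inv_of_closure_eq_top
    Subgroup.closure_closure_coe_preimage fun ⟨_, hs⟩ ⟨a, ha⟩ => by subst ha; exact hσ a hs
  refine ⟨M ⊓ M.comap σ.toMonoidHom, @Subgroup.normal_inf_normal _ _ _ _ hM (hM.comap _),
    Subgroup.map_inf_comap_eq_of_involutive σ hσσ M, rfl, Set.ext fun q => ⟨fun hq => ?_, ?_⟩⟩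
  · have hLq : L q ∈ Subgroup.closure (Set.range L) := Subgroup.subset_closure ⟨q, rfl⟩
    refine ⟨⟨L q, hLq⟩, ⟨hLM q hq hLq, ?_⟩, by simp [hL, h2]⟩
    change σ ⟨L q, hLq⟩ ∈ M
    rw [hσ q hLq]
    exact inv_mem (hLM q hq hLq)
  · rintro ⟨g, ⟨hg, -⟩, rfl⟩
    exact loopCoset_one h1 (K := K) ▸ apply_mem_of_mem_blockStabilizer hg (hB.mem_self 1)

/-- With `Q` a left Bol loop, `σ` an automorphism of `G = LMlt(Q)` inverting all
left translations, and `K` a proper normal subloop of `Q`, one has `K = N(1)` (orbit of `1`)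
for the `σ`-invariant normal subgroup `N = M ∩ M^σ`, where
`M = {g ∈ G | g(yK) = yK for all y}`. -/
theorem stmt3 (Q : Type) [Mul Q] [One Q]
    (h1 : ∀ a : Q, 1 * a = a) (h2 : ∀ a : Q, a * 1 = a)
    (L : Q → Equiv.Perm Q) (hL : ∀ a x : Q, L a x = a * x)
    (R : Q → Equiv.Perm Q) (hR : ∀ a x : Q, R a x = x * a)
    (hBol : ∀ x y z : Q, x * (y * (x * z)) = (x * (y * x)) * z)
    (G : Subgroup (Equiv.Perm Q)) (hG : G = Subgroup.closure (Set.range L))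
    (σ : G ≃* G)
    (hσ : ∀ (x : Q) (hx : L x ∈ G), σ ⟨L x, hx⟩ = (⟨L x, hx⟩ : G)⁻¹)
    (K : Set Q)
    -- `K` is a subloop:
    (hK1 : (1 : Q) ∈ K)
    (hKm : ∀ a ∈ K, ∀ b ∈ K, a * b ∈ K)
    (hKld : ∀ a ∈ K, ∀ b ∈ K, (L a).symm b ∈ K)
    (hKrd : ∀ a ∈ K, ∀ b ∈ K, (R a).symm b ∈ K)
    -- `K` is normal: `x(yK) = (xy)K`, `(Kx)y = K(xy)`, `xK = Kx`:
    (hn1 : ∀ x y : Q, {z | ∃ k ∈ K, z = x * (y * k)} = {z | ∃ k ∈ K, z = (x * y) * k})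
    (hn2 : ∀ x y : Q, {z | ∃ k ∈ K, z = (k * x) * y} = {z | ∃ k ∈ K, z = k * (x * y)})
    (hn3 : ∀ x : Q, {z | ∃ k ∈ K, z = x * k} = {z | ∃ k ∈ K, z = k * x})
    -- `K` is proper:
    (hproper : K ≠ Set.univ) :
    ∃ N : Subgroup G, N.Normal ∧ Subgroup.map σ.toMonoidHom N = N ∧
      ((N : Set G) = {g : G |
          (∀ y : Q, (g : Equiv.Perm Q) '' {z | ∃ k ∈ K, z = y * k} = {z | ∃ k ∈ K, z = y * k}) ∧
          (∀ y : Q, ((σ g : G) : Equiv.Perm Q) '' {z | ∃ k ∈ K, z = y * k}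
              = {z | ∃ k ∈ K, z = y * k})}) ∧
      K = {q : Q | ∃ g ∈ N, ((g : G) : Equiv.Perm Q) 1 = q} :=
  stmt3_general Q h1 h2 L hL G hG σ hσ K hK1 hKm hKld hn1 hn3
end

section
/- Let G be a group, H ≤ G, and S ⊆ G a Bol loop folder: 1 ∈ S, sts ∈ S for all s,t ∈ S, and S is a system of left coset representatives for every conjugate H^g of H in G. Define s∘t to be the unique element of stH ∩ S. Then (S, ∘) is a left Bol loop with identity 1. -/
/-!
A left transversal `S` of `H` represents every left coset `gH` by a unique element, and `s ∘ t`
is the representative of `stH`. Representatives can be absorbed inside products (`a · rep(b)`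
and `ab` lie in the same left coset), so `x ∘ (y ∘ (x ∘ z))` represents `xyxzH`; as `xyx ∈ S`,
also `x ∘ (y ∘ x) = xyx`, so `(x ∘ (y ∘ x)) ∘ z` represents the same coset. Right translation
by `t` is bijective because `stH = s'tH` iff `s⁻¹s'` lies in the conjugate `tHt⁻¹`, of which
`S` is again a left transversal.
-/

open Function Pointwise

namespace Subgroup.IsComplement

variable {G : Type*} [Group G] {H : Subgroup G} {S : Set G} (hS : IsComplement S H)

theorem toLeftFun_eq_iff {g : G} {s : S} : hS.toLeftFun g = s ↔ g⁻¹ * s ∈ H := by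
  refine ⟨fun h ↦ h ▸ hS.inv_mul_toLeftFun_mem g, fun hs ↦ ?_⟩
  obtain ⟨r, -, huniq⟩ := isComplement_iff_existsUnique_inv_mul_mem.mp hS g
  rw [huniq _ (hS.inv_toLeftFun_mul_mem g), huniq s (by simpa using H.inv_mem hs)]

theorem toLeftFun_coe (s : S) : hS.toLeftFun s = s :=
  (hS.toLeftFun_eq_iff).mpr (by simp)

theorem toLeftFun_of_mem {g : G} (hg : g ∈ S) : (hS.toLeftFun g : G) = g :=
  congrArg Subtype.val (hS.toLeftFun_coe ⟨g, hg⟩)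

theorem toLeftFun_eq_toLeftFun_iff {g g' : G} :
    hS.toLeftFun g = hS.toLeftFun g' ↔ g⁻¹ * g' ∈ H := by
  rw [toLeftFun_eq_iff, ← mul_mem_cancel_right (hS.inv_mul_toLeftFun_mem g') (y := g⁻¹ * g'),
    mul_assoc, mul_inv_cancel_left]

theorem toLeftFun_mul_toLeftFun (a b : G) :
    hS.toLeftFun (a * hS.toLeftFun b) = hS.toLeftFun (a * b) := by
  rw [toLeftFun_eq_toLeftFun_iff, mul_inv_rev, mul_assoc, inv_mul_cancel_left]
  exact hS.inv_toLeftFun_mul_mem b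

theorem toLeftFun_mul_right_eq_iff {t : G}
    (hK : IsComplement S (MulAut.conj t • H : Subgroup G)) {a b : G} :
    hS.toLeftFun (a * t) = hS.toLeftFun (b * t) ↔ hK.toLeftFun a = hK.toLeftFun b := by
  rw [toLeftFun_eq_toLeftFun_iff, toLeftFun_eq_toLeftFun_iff,
    Subgroup.mem_pointwise_smul_iff_inv_smul_mem, ← map_inv, MulAut.smul_def, MulAut.conj_apply,
    inv_inv, mul_inv_rev]
  simp only [mul_assoc]

noncomputable def loopMul (s t : S) : S := hS.toLeftFun (s * t)

theorem exists_loopMul_eq (s t : S) : ∃ h ∈ H, (hS.loopMul s t : G) = s * t * h :=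
  ⟨_, hS.inv_mul_toLeftFun_mem _, (mul_inv_cancel_left _ _).symm⟩

theorem one_loopMul (h1 : (1 : G) ∈ S) (t : S) : hS.loopMul ⟨1, h1⟩ t = t := by
  rw [loopMul, one_mul, toLeftFun_coe]

theorem loopMul_one (h1 : (1 : G) ∈ S) (t : S) : hS.loopMul t ⟨1, h1⟩ = t := by
  rw [loopMul, mul_one, toLeftFun_coe]

theorem loopMul_left_bijective (s : S) : Bijective (hS.loopMul s) := by
  refine ⟨fun t t' h ↦ ?_, fun u ↦ ⟨hS.toLeftFun ((s : G)⁻¹ * u), ?_⟩⟩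
  · rwa [loopMul, loopMul, toLeftFun_eq_toLeftFun_iff, mul_inv_rev, mul_assoc, inv_mul_cancel_left,
      ← hS.toLeftFun_eq_toLeftFun_iff, toLeftFun_coe, toLeftFun_coe] at h
  · rw [loopMul, toLeftFun_mul_toLeftFun, mul_inv_cancel_left, toLeftFun_coe]

theorem loopMul_right_bijective (t : S)
    (hK : IsComplement S (MulAut.conj (t : G) • H : Subgroup G)) :
    Bijective (hS.loopMul · t) := by
  refine ⟨fun s s' h ↦ ?_, fun u ↦ ⟨hK.toLeftFun (u * (t : G)⁻¹), ?_⟩⟩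
  · dsimp only at h
    rwa [loopMul, loopMul, toLeftFun_mul_right_eq_iff hS hK, toLeftFun_coe, toLeftFun_coe] at h
  · refine ((hS.toLeftFun_mul_right_eq_iff hK).mpr (hK.toLeftFun_coe _)).trans ?_
    rw [inv_mul_cancel_right, toLeftFun_coe]

theorem loopMul_left_bol (x y z : S) (hxyx : (x : G) * y * x ∈ S) :
    hS.loopMul x (hS.loopMul y (hS.loopMul x z)) =
      hS.loopMul (hS.loopMul x (hS.loopMul y x)) z := by
  simp only [loopMul, toLeftFun_mul_toLeftFun, ← mul_assoc]
  rw [toLeftFun_of_mem hS hxyx]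

end Subgroup.IsComplement

open Subgroup

theorem isComplement_conj_smul_of_existsUnique {G : Type*} [Group G] {H : Subgroup G}
    {S : Set G} {t : G} (ht : ∀ a : G, ∃! x : G, x ∈ S ∧ ∃ h ∈ H, x = a * (t * h * t⁻¹)) :
    IsComplement S (MulAut.conj t • H : Subgroup G) := by
  have mem_iff (a y : G) : y⁻¹ * a ∈ MulAut.conj t • H ↔ ∃ h ∈ H, y = a * (t * h * t⁻¹) := by
    rw [← inv_mem_iff, mul_inv_rev, inv_inv, mem_smul_pointwise_iff_exists]
    simp [MulAut.smul_def, eq_inv_mul_iff_mul_eq, eq_comm]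
  refine isComplement_iff_existsUnique_inv_mul_mem.mpr fun a ↦ ?_
  obtain ⟨x, ⟨hxS, hx⟩, huniq⟩ := ht a
  exact ⟨⟨x, hxS⟩, (mem_iff a x).mpr hx,
    fun y hy ↦ Subtype.ext (huniq y ⟨y.2, (mem_iff a y).mp hy⟩)⟩

/-- A Bol loop folder `(G,H,S)` yields a left Bol loop structure on `S` with
identity `1`, where `s ∘ t` is the unique element of `stH ∩ S`. -/
theorem stmt4 (G : Type) [Group G] (H : Subgroup G) (S : Set G)
    (h1 : (1 : G) ∈ S)
    (hsts : ∀ s ∈ S, ∀ t ∈ S, s * t * s ∈ S)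
    (htrans : ∀ g a : G, ∃! x : G, x ∈ S ∧ ∃ h ∈ H, x = a * (g⁻¹ * h * g)) :
    ∃ m : S → S → S,
      (∀ s t : S, ∃ h ∈ H, ((m s t : G)) = (s : G) * (t : G) * h) ∧
      (∀ t : S, m ⟨1, h1⟩ t = t) ∧
      (∀ t : S, m t ⟨1, h1⟩ = t) ∧
      (∀ s : S, Function.Bijective (m s)) ∧
      (∀ t : S, Function.Bijective (fun s => m s t)) ∧
      (∀ x y z : S, m x (m y (m x z)) = m (m x (m y x)) z) := by
  have hK (t : G) : IsComplement S (MulAut.conj t • H : Subgroup G) :=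
    isComplement_conj_smul_of_existsUnique (by simpa using htrans t⁻¹)
  have hS : IsComplement S H := by simpa using hK 1
  exact ⟨hS.loopMul, hS.exists_loopMul_eq, hS.one_loopMul h1, hS.loopMul_one h1,
    hS.loopMul_left_bijective, fun t ↦ hS.loopMul_right_bijective t (hK t),
    fun x y z ↦ hS.loopMul_left_bol x y z (hsts x x.2 y y.2)⟩
end

section
/- Let (X, Y₀, Y₁) be an exact factorization triple, G = X × X, H = Y₀ × Y₁, S = {(x,x^{-1}) : x ∈ X}. Then S is a left transversal of every conjugate H^g of H in G; together with 1 ∈ S and sts ∈ S for s,t ∈ S, the triple (G,H,S) is a Bol loop folder. -/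
/-!
Write `x = (z, z⁻¹)`. The condition `x ∈ a * g⁻¹ (Y₀ × Y₁) g` says that
`v = g₁ a₁⁻¹ z⁻¹ g₁⁻¹` lies in `Y₁` and `c v d ∈ Y₀`, where `c = g₀ a₁ g₁⁻¹` and
`d = g₁ a₀ g₀⁻¹`. So transversality reduces to: every two-sided translate `c Y₁ d` meets `Y₀`
exactly once. Factoring `c ∈ Y₀ Y₁` and `d ∈ Y₁ Y₀` gives a point of intersection; it is unique
because `Y₁` meets every conjugate of `Y₀` trivially.
-/

theorem existsUnique_prod_snd_eq_and_iff {α β : Type*} (f : α → β) (P : α × β → Prop) :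
    (∃! x : α × β, x.2 = f x.1 ∧ P x) ↔ ∃! a, P (a, f a) := by
  constructor
  · rintro ⟨⟨a, b⟩, ⟨hb, hP⟩, huniq⟩
    obtain rfl : b = f a := hb
    exact ⟨a, hP, fun a' hP' => congrArg Prod.fst (huniq (a', f a') ⟨rfl, hP'⟩)⟩
  · rintro ⟨a, hP, huniq⟩
    refine ⟨(a, f a), ⟨rfl, hP⟩, ?_⟩
    rintro ⟨a', b'⟩ ⟨hb', hP'⟩
    obtain rfl : b' = f a' := hb'
    rw [huniq a' hP']

theorem mul_mul_mem_graph_inv {G : Type*} [Group G] {s t : G × G} (hs : s.2 = s.1⁻¹)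
    (ht : t.2 = t.1⁻¹) : (s * t * s).2 = (s * t * s).1⁻¹ := by
  simp only [Prod.fst_mul, Prod.snd_mul, hs, ht, mul_inv_rev, mul_assoc]

namespace Subgroup

variable {G : Type*} [Group G] {H K : Subgroup G}

theorem isComplement'_of_inf_eq_bot_of_forall_exists_mul (hint : H ⊓ K = ⊥)
    (hfact : ∀ x : G, ∃ h ∈ H, ∃ k ∈ K, x = h * k) : H.IsComplement' K := by
  refine isComplement'_of_disjoint_and_mul_eq_univ (disjoint_iff.mpr hint) ?_
  refine Set.eq_univ_iff_forall.mpr fun x => ?_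
  obtain ⟨h, hh, k, hk, rfl⟩ := hfact x
  exact Set.mul_mem_mul hh hk

theorem IsComplement'.exists_mul_eq (hc : H.IsComplement' K) (g : G) :
    ∃ h ∈ H, ∃ k ∈ K, h * k = g := by
  obtain ⟨⟨h, k⟩, hg⟩ := hc.2 g
  exact ⟨h, h.2, k, k.2, hg⟩

theorem IsComplement'.eq_one_of_conj_mem (hc : H.IsComplement' K) {z : G} (d : G)
    (hz : z ∈ K) (hzd : d⁻¹ * z * d ∈ H) : z = 1 := by
  obtain ⟨k, hk, h, hh, rfl⟩ := hc.symm.exists_mul_eq d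
  have hconj : k⁻¹ * z * k ∈ H ⊓ K := by
    refine mem_inf.mpr ⟨?_, mul_mem (mul_mem (inv_mem hk) hz) hk⟩
    have : k⁻¹ * z * k = h * ((k * h)⁻¹ * z * (k * h)) * h⁻¹ := by group
    exact this ▸ H.mul_mem (H.mul_mem hh hzd) (H.inv_mem hh)
  rwa [hc.disjoint.eq_bot, mem_bot, mul_eq_one_iff_eq_inv, inv_mul_eq_iff_eq_mul,
    mul_inv_cancel] at hconj

theorem IsComplement'.existsUnique_mul_mem (hc : H.IsComplement' K) (c d : G) :
    ∃! v, v ∈ K ∧ c * v * d ∈ H := by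
  obtain ⟨h₁, hh₁, k₁, hk₁, hc₁⟩ := hc.exists_mul_eq c
  obtain ⟨k₂, hk₂, h₂, hh₂, hd₂⟩ := hc.symm.exists_mul_eq d
  have hv₀ : k₁⁻¹ * k₂⁻¹ ∈ K := mul_mem (inv_mem hk₁) (inv_mem hk₂)
  have hcv₀d : c * (k₁⁻¹ * k₂⁻¹) * d ∈ H := by
    have : c * (k₁⁻¹ * k₂⁻¹) * d = h₁ * h₂ := by rw [← hc₁, ← hd₂]; group
    exact this ▸ mul_mem hh₁ hh₂
  refine ⟨_, ⟨hv₀, hcv₀d⟩, fun v ⟨hv, hcvd⟩ => ?_⟩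
  set v₀ := k₁⁻¹ * k₂⁻¹
  have hquot : d⁻¹ * (v₀⁻¹ * v) * d ∈ H := by
    have : d⁻¹ * (v₀⁻¹ * v) * d = (c * v₀ * d)⁻¹ * (c * v * d) := by group
    exact this ▸ mul_mem (inv_mem hcv₀d) hcvd
  simpa [inv_mul_eq_one, eq_comm] using
    hc.eq_one_of_conj_mem d (mul_mem (inv_mem hv₀) hv) hquot

theorem mem_leftCoset_conj_iff (H : Subgroup G) (g a x : G) :
    (∃ h ∈ H, x = a * (g⁻¹ * h * g)) ↔ g * a⁻¹ * x * g⁻¹ ∈ H := by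
  constructor
  · rintro ⟨h, hh, rfl⟩
    simpa [mul_assoc] using hh
  · exact fun hx => ⟨_, hx, by group⟩

theorem IsComplement'.existsUnique_graph_inv_mem_leftCoset_conj (hc : H.IsComplement' K)
    (g a : G × G) :
    ∃! x : G × G, x.2 = x.1⁻¹ ∧ ∃ h ∈ H.prod K, x = a * (g⁻¹ * h * g) := by
  obtain ⟨g₀, g₁⟩ := g
  obtain ⟨a₀, a₁⟩ := a
  simp_rw [existsUnique_prod_snd_eq_and_iff, mem_leftCoset_conj_iff, mem_prod]
  simp only [Prod.fst_mul, Prod.snd_mul, Prod.fst_inv, Prod.snd_inv]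
  let e : G ≃ G := (Equiv.inv G).trans ((Equiv.mulLeft (g₁ * a₁⁻¹)).trans (Equiv.mulRight g₁⁻¹))
  refine (Equiv.existsUnique_congr e fun z => ?_).mpr
    (hc.existsUnique_mul_mem (g₀ * a₁ * g₁⁻¹) (g₁ * a₀ * g₀⁻¹))
  have hcvd : g₀ * a₁ * g₁⁻¹ * e z * (g₁ * a₀ * g₀⁻¹) = (g₀ * a₀⁻¹ * z * g₀⁻¹)⁻¹ := by
    simp only [e, Equiv.trans_apply, Equiv.inv_apply, Equiv.coe_mulLeft, Equiv.coe_mulRight]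
    group
  rw [and_comm, hcvd, inv_mem_iff]
  rfl

end Subgroup

/-- For an exact factorization triple `(X,Y₀,Y₁)`, the triple
`(G,H,S) = (X × X, Y₀ × Y₁, {(x,x⁻¹)})` is a Bol loop folder: `1 ∈ S`, `sts ∈ S` for
`s,t ∈ S`, and `S` is a left transversal of every conjugate of `H` in `G`. -/
theorem stmt6 (X : Type) [Group X] (Y₀ Y₁ : Subgroup X)
    (hint : Y₀ ⊓ Y₁ = ⊥)
    (hfact : ∀ x : X, ∃ y₀ ∈ Y₀, ∃ y₁ ∈ Y₁, x = y₀ * y₁) :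
    ((1 : X × X) ∈ {p : X × X | p.2 = p.1⁻¹}) ∧
    (∀ s ∈ {p : X × X | p.2 = p.1⁻¹}, ∀ t ∈ {p : X × X | p.2 = p.1⁻¹},
        s * t * s ∈ {p : X × X | p.2 = p.1⁻¹}) ∧
    (∀ g a : X × X, ∃! x : X × X, x ∈ {p : X × X | p.2 = p.1⁻¹} ∧
        ∃ h ∈ Y₀.prod Y₁, x = a * (g⁻¹ * h * g)) :=
  ⟨by simp, fun _ hs _ ht => mul_mul_mem_graph_inv hs ht,
    (Subgroup.isComplement'_of_inf_eq_bot_of_forall_exists_mul hint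
      hfact).existsUnique_graph_inv_mem_leftCoset_conj⟩
end

section
/- Let X be a group and Ĝ = ⟨(x, x^{-1}) : x ∈ X⟩ ≤ X × X. Then X' × X' ≤ Ĝ, where X' is the commutator subgroup of X. -/
open scoped commutatorElement

/-- For any group `X`, the subgroup `Ĝ = ⟨(x,x⁻¹) : x ∈ X⟩` of `X × X`
contains `X' × X'`. -/
theorem stmt12 (X : Type) [Group X] :
    (commutator X).prod (commutator X) ≤
      Subgroup.closure {p : X × X | p.2 = p.1⁻¹} := by
  set H := Subgroup.closure {p : X × X | p.2 = p.1⁻¹} with hH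
  have hgen : ∀ x : X, ((x, x⁻¹) : X × X) ∈ H := fun x => Subgroup.subset_closure rfl
  have hleft : ∀ c ∈ commutator X, ((c, 1) : X × X) ∈ H := by
    intro c hc
    rw [commutator_eq_closure] at hc
    induction hc using Subgroup.closure_induction with
    | mem x hx =>
      obtain ⟨a, b, rfl⟩ := hx
      have h : ((⁅a, b⁆, (1:X)) : X × X)
          = (a, a⁻¹) * (b, b⁻¹) * (a⁻¹ * b⁻¹, (a⁻¹ * b⁻¹)⁻¹) := by
        simp [commutatorElement_def, Prod.ext_iff, mul_assoc]
      rw [h]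
      exact mul_mem (mul_mem (hgen a) (hgen b)) (hgen _)
    | one => exact one_mem H
    | mul x y _ _ hx hy =>
      have h : ((x * y, (1:X)) : X × X) = (x, 1) * (y, 1) := by simp
      rw [h]; exact mul_mem hx hy
    | inv x _ hx =>
      have h : ((x⁻¹, (1:X)) : X × X) = (x, 1)⁻¹ := by simp
      rw [h]; exact inv_mem hx
  have hright : ∀ c ∈ commutator X, (((1:X), c) : X × X) ∈ H := by
    intro c hc
    rw [commutator_eq_closure] at hc
    induction hc using Subgroup.closure_induction with
    | mem x hx =>
      obtain ⟨a, b, rfl⟩ := hx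
      have h : (((1:X), ⁅a, b⁆) : X × X)
          = ((a * b)⁻¹, ((a * b)⁻¹)⁻¹) * (a, a⁻¹) * (b, b⁻¹) := by
        simp [commutatorElement_def, Prod.ext_iff, mul_assoc]
      rw [h]
      exact mul_mem (mul_mem (hgen _) (hgen a)) (hgen b)
    | one => exact one_mem H
    | mul x y _ _ hx hy =>
      have h : (((1:X), x * y) : X × X) = (1, x) * (1, y) := by simp
      rw [h]; exact mul_mem hx hy
    | inv x _ hx =>
      have h : (((1:X), x⁻¹) : X × X) = (1, x)⁻¹ := by simp
      rw [h]; exact inv_mem hx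
  rintro ⟨p1, p2⟩ ⟨h1, h2⟩
  have h : ((p1, p2) : X × X) = (p1, 1) * (1, p2) := by simp
  rw [h]
  exact mul_mem (hleft p1 h1) (hright p2 h2)
end

section
/- Let X be the group of maps f(z) = a z^τ + b on F₂₇ with a a nonzero square, b ∈ F₂₇, τ ∈ Aut(F₂₇). Then |X| = 1053 = 3⁴·13, the derived subgroup is X' = {z ↦ az + b : a nonzero square, b ∈ F₂₇}, and the second derived subgroup is X'' = {z ↦ z + b : b ∈ F₂₇}. -/
instance : Fact (Nat.Prime 3) := ⟨by norm_num⟩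

noncomputable section Stmt17Aux

open Equiv Polynomial
open scoped commutatorElement

local notation "F" => GaloisField 3 3

def SBig : Set (Equiv.Perm F) :=
  {π : Equiv.Perm F | ∃ (a b : F) (τ : F ≃+* F),
      IsSquare a ∧ a ≠ 0 ∧ ∀ z, π z = a * τ z + b}

def SAff : Set (Equiv.Perm F) :=
  {π : Equiv.Perm F | ∃ a b : F, IsSquare a ∧ a ≠ 0 ∧ ∀ z, π z = a * z + b}

def STr : Set (Equiv.Perm F) := {π : Equiv.Perm F | ∃ b : F, ∀ z, π z = z + b}

def mkP (a b : F) (ha : a ≠ 0) (τ : F ≃+* F) : Equiv.Perm F where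
  toFun z := a * τ z + b
  invFun z := τ.symm (a⁻¹ * (z - b))
  left_inv z := by field_simp; simp [ha]
  right_inv z := by
    simp only [map_mul, map_sub]
    rw [RingEquiv.apply_symm_apply, RingEquiv.apply_symm_apply, RingEquiv.apply_symm_apply]
    field_simp
    ring

lemma mkP_apply (a b : F) (ha : a ≠ 0) (τ : F ≃+* F) (z : F) :
    mkP a b ha τ z = a * τ z + b := rfl

lemma perm_inv_apply (f : Equiv.Perm F) (a b : F) (ha : a ≠ 0) (τ : F ≃+* F)
    (hf : ∀ z, f z = a * τ z + b) (z : F) : f⁻¹ z = τ.symm (a⁻¹ * (z - b)) := by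
  apply f.injective
  rw [← Equiv.Perm.mul_apply, mul_inv_cancel, Equiv.Perm.one_apply, hf, RingEquiv.apply_symm_apply]
  field_simp
  ring

def XG : Subgroup (Equiv.Perm F) where
  carrier := SBig
  one_mem' := ⟨1, 0, RingEquiv.refl _, IsSquare.one, one_ne_zero, fun z => by simp⟩
  mul_mem' := by
    rintro f g ⟨a₁, b₁, σ, hs₁, ha₁, hf⟩ ⟨a₂, b₂, τ, hs₂, ha₂, hg⟩
    refine ⟨a₁ * σ a₂, a₁ * σ b₂ + b₁, τ.trans σ, hs₁.mul (hs₂.map σ),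
      mul_ne_zero ha₁ (fun h => ha₂ (by simpa using σ.injective (h.trans (map_zero σ).symm))),
      fun z => ?_⟩
    simp only [Equiv.Perm.mul_apply, hf, hg, map_add, map_mul, RingEquiv.coe_trans,
      Function.comp_apply]
    ring
  inv_mem' := by
    rintro f ⟨a, b, τ, hs, ha, hf⟩
    refine ⟨τ.symm a⁻¹, -τ.symm (a⁻¹ * b), τ.symm, (hs.inv).map τ.symm,
      fun h => (inv_ne_zero ha) (by simpa using τ.symm.injective (h.trans (map_zero _).symm)),
      fun z => ?_⟩
    rw [perm_inv_apply f a b ha τ hf z, mul_sub, map_sub, map_mul]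
    ring

def AG : Subgroup (Equiv.Perm F) where
  carrier := SAff
  one_mem' := ⟨1, 0, IsSquare.one, one_ne_zero, fun z => by simp⟩
  mul_mem' := by
    rintro f g ⟨a₁, b₁, hs₁, ha₁, hf⟩ ⟨a₂, b₂, hs₂, ha₂, hg⟩
    exact ⟨a₁ * a₂, a₁ * b₂ + b₁, hs₁.mul hs₂, mul_ne_zero ha₁ ha₂,
      fun z => by simp only [Equiv.Perm.mul_apply, hf, hg]; ring⟩
  inv_mem' := by
    rintro f ⟨a, b, hs, ha, hf⟩
    refine ⟨a⁻¹, -(a⁻¹ * b), hs.inv, inv_ne_zero ha, fun z => ?_⟩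
    rw [perm_inv_apply f a b ha (RingEquiv.refl _) hf z]
    simp only [RingEquiv.symm_refl, RingEquiv.refl_apply]
    ring

def TG : Subgroup (Equiv.Perm F) where
  carrier := STr
  one_mem' := ⟨0, fun z => by simp⟩
  mul_mem' := by
    rintro f g ⟨b₁, hf⟩ ⟨b₂, hg⟩
    exact ⟨b₂ + b₁, fun z => by simp only [Equiv.Perm.mul_apply, hf, hg]; ring⟩
  inv_mem' := by
    rintro f ⟨b, hf⟩
    refine ⟨-b, fun z => ?_⟩
    have := perm_inv_apply f 1 b one_ne_zero (RingEquiv.refl _) (fun z => by simp only [RingEquiv.refl_apply, one_mul, hf]) z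
    rw [this]; simp only [RingEquiv.symm_refl, RingEquiv.refl_apply]; ring

lemma closure_SBig : Subgroup.closure SBig = XG := by
  rw [show SBig = (XG : Set (Equiv.Perm F)) from rfl, Subgroup.closure_eq]


lemma natCard_F : Nat.card F = 27 := by
  have := GaloisField.card 3 3 (by norm_num)
  simpa using this

def autEquivAlg : (F ≃+* F) ≃ (F ≃ₐ[ZMod 3] F) where
  toFun τ := AlgEquiv.ofRingEquiv (f := τ) (fun x => by
    have h : (τ : F →+* F).comp (algebraMap (ZMod 3) F) = algebraMap (ZMod 3) F :=
      RingHom.ext_zmod _ _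
    exact DFunLike.congr_fun h x)
  invFun e := e.toRingEquiv
  left_inv τ := rfl
  right_inv e := rfl

lemma card_aut : Nat.card (F ≃+* F) = 3 := by
  rw [Nat.card_congr autEquivAlg, IsGalois.card_aut_eq_finrank,
    GaloisField.finrank 3 (by norm_num)]

lemma aut_comm (σ τ : F ≃+* F) (x : F) : σ (τ x) = τ (σ x) := by
  have : IsCyclic (RingAut F) := isCyclic_of_prime_card (p := 3) card_aut
  letI := IsCyclic.commGroup (α := RingAut F)
  exact congrArg (fun e : RingAut F => e x) (mul_comm σ τ)

lemma card_sq : Nat.card {a : F // IsSquare a ∧ a ≠ 0} = 13 := by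
  haveI : Fintype F := Fintype.ofFinite _
  classical
  have hF : Fintype.card F = 27 := by rw [← Nat.card_eq_fintype_card]; exact natCard_F
  have hchar : ringChar F ≠ 2 := by rw [ringChar.eq F 3]; norm_num
  obtain ⟨g, hg⟩ := IsCyclic.exists_generator (α := Fˣ)
  have horder : orderOf g = 26 := by
    rw [orderOf_eq_card_of_forall_mem_zpowers hg, Nat.card_eq_fintype_card,
      Fintype.card_units, hF]
  have hζ : orderOf (g ^ 2) = 13 := by
    rw [orderOf_pow, horder]
    norm_num
  have hprim : IsPrimitiveRoot (((g ^ 2 : Fˣ) : F)) 13 :=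
    IsPrimitiveRoot.coe_units_iff.mpr (hζ ▸ IsPrimitiveRoot.orderOf (g ^ 2))
  have hmem : ∀ a : F, (IsSquare a ∧ a ≠ 0) ↔ a ∈ Polynomial.nthRootsFinset 13 (1 : F) := by
    intro a
    rw [Polynomial.mem_nthRootsFinset (by norm_num)]
    constructor
    · rintro ⟨hs, ha⟩
      have := (FiniteField.isSquare_iff hchar ha).mp hs
      rwa [hF, show (27 : ℕ) / 2 = 13 from by norm_num] at this
    · intro h
      have ha : a ≠ 0 := by
        rintro rfl
        rw [zero_pow (by norm_num)] at h
        exact one_ne_zero h.symm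
      refine ⟨(FiniteField.isSquare_iff hchar ha).mpr ?_, ha⟩
      rwa [hF, show (27 : ℕ) / 2 = 13 from by norm_num]
  rw [Nat.card_congr (Equiv.subtypeEquivRight hmem), Nat.card_eq_finsetCard,
    hprim.card_nthRootsFinset]

lemma card_XG : Nat.card XG = 1053 := by
  have hinj : Function.Injective
      (fun x : {a : F // IsSquare a ∧ a ≠ 0} × F × (F ≃+* F) =>
        (⟨mkP x.1.1 x.2.1 x.1.2.2 x.2.2,
          ⟨x.1.1, x.2.1, x.2.2, x.1.2.1, x.1.2.2, fun z => rfl⟩⟩ : XG)) := by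
    rintro ⟨⟨a, hsa, ha⟩, b, τ⟩ ⟨⟨a', hsa', ha'⟩, b', τ'⟩ h
    simp only [Subtype.mk.injEq] at h
    have hfun : ∀ z : F, a * τ z + b = a' * τ' z + b' := by
      intro z
      have := congrArg (fun e : XG => (e : Equiv.Perm F) z) h
      simpa [mkP_apply] using this
    have hb : b = b' := by have := hfun 0; simpa using this
    have haa : a = a' := by have := hfun 1; simpa [hb] using this
    have hτ : τ = τ' := by
      ext z
      have := hfun z
      rw [hb, haa] at this
      exact mul_left_cancel₀ ha' (by linear_combination this)
    simp [hb, haa, hτ]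
  have hsurj : Function.Surjective
      (fun x : {a : F // IsSquare a ∧ a ≠ 0} × F × (F ≃+* F) =>
        (⟨mkP x.1.1 x.2.1 x.1.2.2 x.2.2,
          ⟨x.1.1, x.2.1, x.2.2, x.1.2.1, x.1.2.2, fun z => rfl⟩⟩ : XG)) := by
    rintro ⟨π, a, b, τ, hs, ha, hπ⟩
    exact ⟨⟨⟨a, hs, ha⟩, b, τ⟩, Subtype.ext (Equiv.ext fun z => (hπ z).symm)⟩
  rw [← Nat.card_congr (Equiv.ofBijective _ ⟨hinj, hsurj⟩), Nat.card_prod, Nat.card_prod,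
    card_sq, card_aut, natCard_F]


lemma map_ne_zero' (τ : F ≃+* F) {a : F} (ha : a ≠ 0) : τ a ≠ 0 := fun h =>
  ha (by simpa using τ.injective (h.trans (map_zero τ).symm))

lemma commXG_le_AG : ⁅XG, XG⁆ ≤ AG := by
  rw [Subgroup.commutator_le]
  rintro f ⟨a₁, b₁, σ, hs₁, ha₁, hf⟩ g ⟨a₂, b₂, τ, hs₂, ha₂, hg⟩
  have hσ2 : σ a₂ ≠ 0 := map_ne_zero' σ ha₂
  have hτ1 : τ a₁ ≠ 0 := map_ne_zero' τ ha₁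
  refine ⟨a₁ * σ a₂ * (τ a₁)⁻¹ * a₂⁻¹,
    a₁ * σ a₂ * (τ a₁)⁻¹ * (-(a₂⁻¹ * b₂) - τ b₁) + a₁ * σ b₂ + b₁,
    ((hs₁.mul (hs₂.map σ)).mul ((hs₁.map τ).inv)).mul hs₂.inv,
    mul_ne_zero (mul_ne_zero (mul_ne_zero ha₁ hσ2) (inv_ne_zero hτ1)) (inv_ne_zero ha₂),
    fun z => ?_⟩
  rw [commutatorElement_def]
  simp only [Equiv.Perm.mul_apply]
  rw [perm_inv_apply g a₂ b₂ ha₂ τ hg, perm_inv_apply f a₁ b₁ ha₁ σ hf, hg, hf,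
    map_add, map_mul, aut_comm σ τ, RingEquiv.apply_symm_apply]
  simp only [map_mul, map_sub, map_inv₀, RingEquiv.apply_symm_apply]
  field_simp
  ring

lemma exists_sq_ne_one : ∃ c : F, IsSquare c ∧ c ≠ 0 ∧ c ≠ 1 := by
  haveI : Fintype F := Fintype.ofFinite _
  classical
  have hF : Fintype.card F = 27 := by rw [← Nat.card_eq_fintype_card]; exact natCard_F
  obtain ⟨g, hg⟩ := IsCyclic.exists_generator (α := Fˣ)
  have horder : orderOf g = 26 := by
    rw [orderOf_eq_card_of_forall_mem_zpowers hg, Nat.card_eq_fintype_card,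
      Fintype.card_units, hF]
  refine ⟨((g : F)) ^ 2, ⟨(g : F), sq (g : F)⟩, pow_ne_zero _ (Units.ne_zero g), fun h => ?_⟩
  have : (g ^ 2 : Fˣ) = 1 := by
    ext
    push_cast
    exact h
  have := orderOf_dvd_of_pow_eq_one this
  rw [horder] at this
  norm_num at this

lemma AG_le_XG : AG ≤ XG := by
  rintro π ⟨a, b, hs, ha, hπ⟩
  exact ⟨a, b, RingEquiv.refl _, hs, ha, fun z => by simpa using hπ z⟩

lemma TG_le_commAG : TG ≤ ⁅AG, AG⁆ := by
  rintro π ⟨b, hπ⟩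
  obtain ⟨c, hcs, hc0, hc1⟩ := exists_sq_ne_one
  have h1c : (1 : F) - c ≠ 0 := sub_ne_zero.mpr (fun h => hc1 h.symm)
  set b' : F := (1 - c)⁻¹ * b with hb'
  have hπ_eq : π = ⁅mkP 1 b' one_ne_zero (RingEquiv.refl F),
      mkP c 0 hc0 (RingEquiv.refl F)⁆ := by
    apply Equiv.ext
    intro z
    rw [hπ, commutatorElement_def]
    simp only [Equiv.Perm.mul_apply]
    rw [perm_inv_apply (mkP c 0 hc0 (RingEquiv.refl F)) c 0 hc0 (RingEquiv.refl F) (fun _ => rfl),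
      perm_inv_apply (mkP 1 b' one_ne_zero (RingEquiv.refl F)) 1 b' one_ne_zero (RingEquiv.refl F)
        (fun _ => rfl),
      mkP_apply, mkP_apply]
    simp only [RingEquiv.symm_refl, RingEquiv.refl_apply, one_mul, inv_one, sub_zero, add_zero]
    rw [hb']
    field_simp
    ring
  rw [hπ_eq]
  exact Subgroup.commutator_mem_commutator
    ⟨1, b', IsSquare.one, one_ne_zero, fun z => rfl⟩
    ⟨c, 0, hcs, hc0, fun z => rfl⟩

lemma scaling_mem_commXG {a : F} (hs : IsSquare a) (ha : a ≠ 0) :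
    mkP a 0 ha (RingEquiv.refl F) ∈ ⁅XG, XG⁆ := by
  haveI : Fintype F := Fintype.ofFinite _
  have hF : Fintype.card F = 27 := by rw [← Nat.card_eq_fintype_card]; exact natCard_F
  obtain ⟨w, hw⟩ := hs
  have hw0 : w ≠ 0 := fun h => ha (by rw [hw, h, mul_zero])
  have h26 : w ^ 26 = 1 := by
    have := FiniteField.pow_card_sub_one_eq_one w hw0
    rwa [hF] at this
  have hu0 : (w : F) ^ 12 ≠ 0 := pow_ne_zero _ hw0
  have hkey : w ^ 12 * (((w ^ 12)⁻¹) ^ 3) = a := by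
    rw [hw]
    field_simp
    linear_combination -h26
  have heq : mkP a 0 ha (RingEquiv.refl F) =
      ⁅mkP (w ^ 12) 0 hu0 (RingEquiv.refl F), mkP 1 0 one_ne_zero (frobeniusEquiv F 3)⁆ := by
    apply Equiv.ext
    intro z
    rw [commutatorElement_def]
    simp only [Equiv.Perm.mul_apply]
    rw [perm_inv_apply (mkP 1 0 one_ne_zero (frobeniusEquiv F 3)) 1 0 one_ne_zero
        (frobeniusEquiv F 3) (fun _ => rfl),
      perm_inv_apply (mkP (w ^ 12) 0 hu0 (RingEquiv.refl F)) (w ^ 12) 0 hu0 (RingEquiv.refl F)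
        (fun _ => rfl),
      mkP_apply, mkP_apply, mkP_apply]
    simp only [RingEquiv.symm_refl, RingEquiv.refl_apply, one_mul, inv_one, sub_zero, add_zero]
    rw [map_mul, frobeniusEquiv_def, RingEquiv.apply_symm_apply, ← mul_assoc, hkey]
  rw [heq]
  exact Subgroup.commutator_mem_commutator
    ⟨w ^ 12, 0, RingEquiv.refl F, ⟨w ^ 6, by ring⟩, hu0, fun z => rfl⟩
    ⟨1, 0, frobeniusEquiv F 3, IsSquare.one, one_ne_zero, fun z => rfl⟩

lemma AG_le_commXG : AG ≤ ⁅XG, XG⁆ := by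
  rintro π ⟨a, b, hs, ha, hπ⟩
  have h1 : mkP 1 b one_ne_zero (RingEquiv.refl F) ∈ ⁅XG, XG⁆ :=
    Subgroup.commutator_mono AG_le_XG AG_le_XG
      (TG_le_commAG ⟨b, fun z => by simp [mkP_apply]⟩)
  have h2 : mkP a 0 ha (RingEquiv.refl F) ∈ ⁅XG, XG⁆ := scaling_mem_commXG hs ha
  have hπ_eq : π = mkP 1 b one_ne_zero (RingEquiv.refl F) * mkP a 0 ha (RingEquiv.refl F) := by
    apply Equiv.ext
    intro z
    rw [hπ]
    simp only [Equiv.Perm.mul_apply, mkP_apply, RingEquiv.refl_apply]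
    ring
  rw [hπ_eq]
  exact mul_mem h1 h2

lemma commXG_eq_AG : ⁅XG, XG⁆ = AG := le_antisymm commXG_le_AG AG_le_commXG

lemma commAG_le_TG : ⁅AG, AG⁆ ≤ TG := by
  rw [Subgroup.commutator_le]
  rintro f ⟨a₁, b₁, hs₁, ha₁, hf⟩ g ⟨a₂, b₂, hs₂, ha₂, hg⟩
  refine ⟨a₁ * a₂ * (a₁⁻¹ * (-(a₂⁻¹ * b₂) - b₁)) + a₁ * b₂ + b₁, fun z => ?_⟩
  rw [commutatorElement_def]
  simp only [Equiv.Perm.mul_apply]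
  rw [perm_inv_apply g a₂ b₂ ha₂ (RingEquiv.refl F) hg, perm_inv_apply f a₁ b₁ ha₁ (RingEquiv.refl F) hf,
    hg, hf]
  simp only [RingEquiv.symm_refl, RingEquiv.refl_apply]
  field_simp
  ring

lemma commAG_eq_TG : ⁅AG, AG⁆ = TG := le_antisymm commAG_le_TG TG_le_commAG




/-- Let `X` be the group of permutations `z ↦ a z^τ + b` of `F₂₇` with `a` a
nonzero square, `b ∈ F₂₇`, `τ ∈ Aut(F₂₇)`. Then these maps form a subgroup of order
`1053 = 3⁴·13`, with derived subgroup `X' = {z ↦ az + b : a a nonzero square}` and second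
derived subgroup `X'' = {z ↦ z + b}`. -/
theorem stmt17 :
    ((Subgroup.closure {π : Equiv.Perm (GaloisField 3 3) |
        ∃ (a b : GaloisField 3 3) (τ : GaloisField 3 3 ≃+* GaloisField 3 3),
          IsSquare a ∧ a ≠ 0 ∧ ∀ z, π z = a * τ z + b} :
        Subgroup (Equiv.Perm (GaloisField 3 3))) : Set (Equiv.Perm (GaloisField 3 3)))
      = {π : Equiv.Perm (GaloisField 3 3) |
          ∃ (a b : GaloisField 3 3) (τ : GaloisField 3 3 ≃+* GaloisField 3 3),
            IsSquare a ∧ a ≠ 0 ∧ ∀ z, π z = a * τ z + b} ∧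
    Nat.card (Subgroup.closure {π : Equiv.Perm (GaloisField 3 3) |
        ∃ (a b : GaloisField 3 3) (τ : GaloisField 3 3 ≃+* GaloisField 3 3),
          IsSquare a ∧ a ≠ 0 ∧ ∀ z, π z = a * τ z + b}) = 1053 ∧
    (1053 = 3 ^ 4 * 13) ∧
    ((⁅Subgroup.closure {π : Equiv.Perm (GaloisField 3 3) |
        ∃ (a b : GaloisField 3 3) (τ : GaloisField 3 3 ≃+* GaloisField 3 3),
          IsSquare a ∧ a ≠ 0 ∧ ∀ z, π z = a * τ z + b},
      Subgroup.closure {π : Equiv.Perm (GaloisField 3 3) |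
        ∃ (a b : GaloisField 3 3) (τ : GaloisField 3 3 ≃+* GaloisField 3 3),
          IsSquare a ∧ a ≠ 0 ∧ ∀ z, π z = a * τ z + b}⁆ :
        Subgroup (Equiv.Perm (GaloisField 3 3))) : Set (Equiv.Perm (GaloisField 3 3)))
      = {π : Equiv.Perm (GaloisField 3 3) |
          ∃ a b : GaloisField 3 3, IsSquare a ∧ a ≠ 0 ∧ ∀ z, π z = a * z + b} ∧
    ((⁅⁅Subgroup.closure {π : Equiv.Perm (GaloisField 3 3) |
        ∃ (a b : GaloisField 3 3) (τ : GaloisField 3 3 ≃+* GaloisField 3 3),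
          IsSquare a ∧ a ≠ 0 ∧ ∀ z, π z = a * τ z + b},
      Subgroup.closure {π : Equiv.Perm (GaloisField 3 3) |
        ∃ (a b : GaloisField 3 3) (τ : GaloisField 3 3 ≃+* GaloisField 3 3),
          IsSquare a ∧ a ≠ 0 ∧ ∀ z, π z = a * τ z + b}⁆,
      ⁅Subgroup.closure {π : Equiv.Perm (GaloisField 3 3) |
        ∃ (a b : GaloisField 3 3) (τ : GaloisField 3 3 ≃+* GaloisField 3 3),
          IsSquare a ∧ a ≠ 0 ∧ ∀ z, π z = a * τ z + b},
      Subgroup.closure {π : Equiv.Perm (GaloisField 3 3) |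
        ∃ (a b : GaloisField 3 3) (τ : GaloisField 3 3 ≃+* GaloisField 3 3),
          IsSquare a ∧ a ≠ 0 ∧ ∀ z, π z = a * τ z + b}⁆⁆ :
        Subgroup (Equiv.Perm (GaloisField 3 3))) : Set (Equiv.Perm (GaloisField 3 3)))
      = {π : Equiv.Perm (GaloisField 3 3) | ∃ b : GaloisField 3 3, ∀ z, π z = z + b} := by
  have hcl : Subgroup.closure SBig = XG := closure_SBig
  refine ⟨?_, ?_, by norm_num, ?_, ?_⟩
  · show (↑(Subgroup.closure SBig) : Set (Equiv.Perm F)) = SBig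
    rw [hcl]
    rfl
  · show Nat.card (Subgroup.closure SBig) = 1053
    rw [hcl]
    exact card_XG
  · show (↑(⁅Subgroup.closure SBig, Subgroup.closure SBig⁆ :
        Subgroup (Equiv.Perm F)) : Set (Equiv.Perm F)) = SAff
    rw [hcl, commXG_eq_AG]
    rfl
  · show (↑(⁅⁅Subgroup.closure SBig, Subgroup.closure SBig⁆,
        ⁅Subgroup.closure SBig, Subgroup.closure SBig⁆⁆ :
        Subgroup (Equiv.Perm F)) : Set (Equiv.Perm F)) = STr
    rw [hcl, commXG_eq_AG, commAG_eq_TG]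
    rfl
end Stmt17Aux
end

section
/- In a left Bol loop with multiplication groups, the left and right Bol identities give the translation identities R_{xz}R_x^{-1} = L_x^{-1} R_z L_x (right Bol) and L_{xy}L_y^{-1} = R_y^{-1} L_x R_y (left Bol); consequently, in a Moufang loop both LMlt(Q) and RMlt(Q) are normal subgroups of the full multiplication group Mlt(Q). -/
/-!
Both translation identities are the Bol identities read as equalities of permutations. For the
normality of `LMlt(Q)`, conjugating a generator `L x` by `R y` gives `L (x * y) * (L y)⁻¹`, which
stays in `LMlt(Q)`; conjugation by `(R y)⁻¹` is handled the same way because the right Bol identity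
makes `(R y)⁻¹` a right translation again (the right inverse property). The case of `RMlt(Q)` is symmetric.
-/

namespace Subgroup

variable {G : Type*} [Group G]

theorem mem_normalizer_closure_of_conj_mem {s : Set G} {g : G}
    (h : ∀ x ∈ s, g * x * g⁻¹ ∈ closure s) (h' : ∀ x ∈ s, g⁻¹ * x * g ∈ closure s) :
    g ∈ normalizer (closure s) := by
  rw [mem_normalizer_iff_map_conj_eq, MonoidHom.map_closure]
  refine le_antisymm ((closure_le _).2 ?_) ?_
  · rintro _ ⟨x, hx, rfl⟩
    exact h x hx
  · rw [closure_le, ← MonoidHom.map_closure]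
    exact fun x hx ↦ ⟨_, h' x hx, by simp [mul_assoc]⟩

theorem normal_subgroupOf_closure_union {s t : Set G}
    (hconj : ∀ g ∈ t, ∀ x ∈ s, g⁻¹ * x * g ∈ closure s) (hinv : ∀ g ∈ t, g⁻¹ ∈ t) :
    ((closure s).subgroupOf (closure (s ∪ t))).Normal := by
  refine normal_subgroupOf_of_le_normalizer ((closure_le _).2 (Set.union_subset ?_ ?_))
  · exact subset_closure.trans le_normalizer
  · intro g hg
    refine mem_normalizer_closure_of_conj_mem (fun x hx ↦ ?_) (hconj g hg)
    simpa using hconj g⁻¹ (hinv g hg) x hx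

end Subgroup

section BolLoop

open Subgroup

variable {Q : Type*} [Mul Q] {L R : Q → Equiv.Perm Q}

theorem R_mul_mul_inv_eq_of_leftBol (hL : ∀ a x : Q, L a x = a * x)
    (hR : ∀ a x : Q, R a x = x * a)
    (hLeftBol : ∀ x y z : Q, x * (y * (x * z)) = (x * (y * x)) * z) (x z : Q) :
    R (x * z) * (R x)⁻¹ = (L x)⁻¹ * R z * L x := by
  have h : L x * R (x * z) = R z * L x * R x := by
    ext w
    simp only [Equiv.Perm.mul_apply, hL, hR]
    exact hLeftBol x w z
  rw [mul_inv_eq_iff_eq_mul, mul_assoc, mul_assoc, eq_inv_mul_iff_mul_eq, h, mul_assoc]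

theorem L_mul_mul_inv_eq_of_rightBol (hL : ∀ a x : Q, L a x = a * x)
    (hR : ∀ a x : Q, R a x = x * a)
    (hRightBol : ∀ x y z : Q, ((x * y) * z) * y = x * ((y * z) * y)) (x y : Q) :
    L (x * y) * (L y)⁻¹ = (R y)⁻¹ * L x * R y := by
  have h : R y * L (x * y) = L x * R y * L y := by
    ext w
    simp only [Equiv.Perm.mul_apply, hL, hR]
    exact hRightBol x y w
  rw [mul_inv_eq_iff_eq_mul, mul_assoc, mul_assoc, eq_inv_mul_iff_mul_eq, h, mul_assoc]

theorem exists_L_eq_inv_of_leftBol [One Q] (hL : ∀ a x : Q, L a x = a * x)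
    (hR : ∀ a x : Q, R a x = x * a) (h2 : ∀ a : Q, a * 1 = a)
    (hLeftBol : ∀ x y z : Q, x * (y * (x * z)) = (x * (y * x)) * z) (x : Q) :
    ∃ y, L y = (L x)⁻¹ := by
  set y := (R x).symm 1
  have hyx : y * x = 1 := by rw [← hR, Equiv.apply_symm_apply]
  refine ⟨y, eq_inv_of_mul_eq_one_left (Equiv.ext fun z ↦ (L x).injective ?_)⟩
  simp only [Equiv.Perm.mul_apply, Equiv.Perm.one_apply, hL]
  rw [hLeftBol, hyx, h2]

theorem exists_R_eq_inv_of_rightBol [One Q] (hL : ∀ a x : Q, L a x = a * x)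
    (hR : ∀ a x : Q, R a x = x * a) (h1 : ∀ a : Q, 1 * a = a)
    (hRightBol : ∀ x y z : Q, ((x * y) * z) * y = x * ((y * z) * y)) (x : Q) :
    ∃ y, R y = (R x)⁻¹ := by
  set y := (L x).symm 1
  have hxy : x * y = 1 := by rw [← hL, Equiv.apply_symm_apply]
  refine ⟨y, eq_inv_of_mul_eq_one_left (Equiv.ext fun z ↦ (R x).injective ?_)⟩
  simp only [Equiv.Perm.mul_apply, Equiv.Perm.one_apply, hR]
  rw [hRightBol, hxy, h1]

theorem normal_closure_range_L_of_rightBol [One Q] (hL : ∀ a x : Q, L a x = a * x)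
    (hR : ∀ a x : Q, R a x = x * a) (h1 : ∀ a : Q, 1 * a = a)
    (hRightBol : ∀ x y z : Q, ((x * y) * z) * y = x * ((y * z) * y)) :
    ((closure (Set.range L)).subgroupOf (closure (Set.range L ∪ Set.range R))).Normal := by
  refine normal_subgroupOf_closure_union ?_ ?_
  · rintro _ ⟨y, rfl⟩ _ ⟨x, rfl⟩
    rw [← L_mul_mul_inv_eq_of_rightBol hL hR hRightBol]
    exact mul_mem (subset_closure ⟨_, rfl⟩) (inv_mem (subset_closure ⟨_, rfl⟩))
  · rintro _ ⟨y, rfl⟩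
    exact exists_R_eq_inv_of_rightBol hL hR h1 hRightBol y

theorem normal_closure_range_R_of_leftBol [One Q] (hL : ∀ a x : Q, L a x = a * x)
    (hR : ∀ a x : Q, R a x = x * a) (h2 : ∀ a : Q, a * 1 = a)
    (hLeftBol : ∀ x y z : Q, x * (y * (x * z)) = (x * (y * x)) * z) :
    ((closure (Set.range R)).subgroupOf (closure (Set.range L ∪ Set.range R))).Normal := by
  rw [Set.union_comm]
  refine normal_subgroupOf_closure_union ?_ ?_
  · rintro _ ⟨x, rfl⟩ _ ⟨z, rfl⟩
    rw [← R_mul_mul_inv_eq_of_leftBol hL hR hLeftBol]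
    exact mul_mem (subset_closure ⟨_, rfl⟩) (inv_mem (subset_closure ⟨_, rfl⟩))
  · rintro _ ⟨x, rfl⟩
    exact exists_L_eq_inv_of_leftBol hL hR h2 hLeftBol x

end BolLoop

/-- In a loop, the right Bol identity yields `R_{xz}R_x⁻¹ = L_x⁻¹R_zL_x` and the
left Bol identity yields `L_{xy}L_y⁻¹ = R_y⁻¹L_xR_y`; consequently, in a Moufang loop (both
identities) the left and right multiplication groups are normal in the full multiplication
group. -/
theorem stmt18 (Q : Type) [Mul Q] [One Q]
    (h1 : ∀ a : Q, 1 * a = a) (h2 : ∀ a : Q, a * 1 = a)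
    (L : Q → Equiv.Perm Q) (hL : ∀ a x : Q, L a x = a * x)
    (R : Q → Equiv.Perm Q) (hR : ∀ a x : Q, R a x = x * a)
    (hLeftBol : ∀ x y z : Q, x * (y * (x * z)) = (x * (y * x)) * z)
    (hRightBol : ∀ x y z : Q, ((x * y) * z) * y = x * ((y * z) * y)) :
    (∀ x z : Q, R (x * z) * (R x)⁻¹ = (L x)⁻¹ * R z * L x) ∧
    (∀ x y : Q, L (x * y) * (L y)⁻¹ = (R y)⁻¹ * L x * R y) ∧
    ((Subgroup.closure (Set.range L)).subgroupOf
        (Subgroup.closure (Set.range L ∪ Set.range R))).Normal ∧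
    ((Subgroup.closure (Set.range R)).subgroupOf
        (Subgroup.closure (Set.range L ∪ Set.range R))).Normal :=
  ⟨R_mul_mul_inv_eq_of_leftBol hL hR hLeftBol, L_mul_mul_inv_eq_of_rightBol hL hR hRightBol,
    normal_closure_range_L_of_rightBol hL hR h1 hRightBol,
    normal_closure_range_R_of_leftBol hL hR h2 hLeftBol⟩
end
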